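/- Let x₁,x₂,x₃,x₄ be a 4-cycle in a d-regular graph with uniform measure μ. Set ρᵢ = ρ(xᵢ) > 0, gᵢ = ψ(x_{i+1})−ψ(xᵢ) (cyclic mod 4), and D(s,t;u,v) = u∂₁θ(s,t)+v∂₂θ(s,t)−θ(u,v). Then B^off_□(ρ,ψ) := (μ/d²) Σ_{i=1}^4 [ (1/2)gᵢ²(∂₁θ(ρᵢ,ρ_{i+1})(ρ_{i−1}−ρᵢ) + ∂₂θ(ρᵢ,ρ_{i+1})(ρ_{i+2}−ρ_{i+1})) − gᵢ(g_{i+1}+g_{i−1})θ(ρᵢ,ρ_{i+1}) ] equals (μ/(2d²))·(g₁+g₃)²·Σ_{i=1}^4 θ(ρᵢ,ρ_{i+1}) + (μ/(2d²))·Σ_{i=1}^4 gᵢ²·D(ρᵢ,ρ_{i+1};ρ_{i−1},ρ_{i+2}); in particular B^off_□(ρ,ψ) ≥ 0. -/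

import Mathlib

/-- The logarithmic mean `θ(s,t) = ∫₀¹ s^(1-p) t^p dp`. -/
noncomputable def logMean (s t : ℝ) : ℝ := ∫ p in (0:ℝ)..1, s ^ (1 - p) * t ^ p

/-- Partial derivative of the logarithmic mean in the first argument. -/
noncomputable def logMean₁ (s t : ℝ) : ℝ := deriv (fun u => logMean u t) s

/-- Partial derivative of the logarithmic mean in the second argument. -/
noncomputable def logMean₂ (s t : ℝ) : ℝ := deriv (fun v => logMean s v) t

/-- The deficit `D(s,t;u,v) = u ∂₁θ(s,t) + v ∂₂θ(s,t) - θ(u,v)` in the four-point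
inequality for the logarithmic mean. -/
noncomputable def logMeanDeficit (s t u v : ℝ) : ℝ :=
  u * logMean₁ s t + v * logMean₂ s t - logMean u v

/-! The logarithmic mean `θ` is positively homogeneous of degree one, so Euler's relation
`s ∂₁θ(s,t) + t ∂₂θ(s,t) = θ(s,t)` holds, and it is concave, because each integrand
`(u,v) ↦ u^(1-p) v^p` is (weighted AM-GM); together these give `D ≥ 0`. By Euler's relation the
`i`-th bracket equals `Dᵢ + θ_{i+2} - θᵢ` with `θᵢ = θ(ρᵢ,ρ_{i+1})`, using symmetry of `θ` for
`θ(ρ_{i-1},ρ_{i+2}) = θ_{i+2}`. Since `g₁+g₂+g₃+g₄ = 0`, the remaining quadratic form collapses to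
`½ Σ (gᵢ + g_{i+2})² θᵢ`, and `(gᵢ + g_{i+2})² = (g₁ + g₃)²` for every `i`.
-/

open Real Set

theorem hasDerivAt_integral_mul_rpow {a b x : ℝ} {c e : ℝ → ℝ} (hc : Continuous c)
    (he : Continuous e) (hx : 0 < x) :
    HasDerivAt (fun y => ∫ p in a..b, c p * y ^ e p)
      (∫ p in a..b, c p * (e p * x ^ (e p - 1))) x := by
  have hF' : ContinuousOn (fun z : ℝ × ℝ => c z.2 * (e z.2 * z.1 ^ (e z.2 - 1)))
      (Ioi 0 ×ˢ univ) := fun z hz =>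
    have hz : z.1 ≠ 0 := (mem_prod.1 hz).1.ne'
    ContinuousAt.continuousWithinAt <| by
      apply_rules [ContinuousAt.mul, ContinuousAt.rpow, ContinuousAt.sub, continuousAt_fst,
        continuousAt_const, Or.inl, (hc.comp continuous_snd).continuousAt,
        (he.comp continuous_snd).continuousAt]
  have hpos : Metric.closedBall x (x / 2) ⊆ Ioi 0 := fun y hy => by
    rw [Metric.mem_closedBall, Real.dist_eq, abs_le] at hy
    exact show 0 < y by linarith
  obtain ⟨C, hC⟩ := ((isCompact_closedBall x _).prod isCompact_uIcc).exists_bound_of_continuousOn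
    (hF'.mono (prod_mono hpos (subset_univ (uIcc a b))))
  refine (intervalIntegral.hasDerivAt_integral_of_dominated_loc_of_deriv_le
    (F := fun y p => c p * y ^ e p) (F' := fun y p => c p * (e p * y ^ (e p - 1)))
    (bound := fun _ => C) (Metric.ball_mem_nhds x (half_pos hx)) ?_ ?_ ?_ ?_
    intervalIntegrable_const ?_).2
  · exact .of_forall fun y =>
      (hc.measurable.mul (measurable_const.pow he.measurable)).aestronglyMeasurable
  · exact (hc.mul (continuous_const.rpow he fun _ => Or.inl hx.ne')).intervalIntegrable _ _
  · exact (hc.measurable.mul (he.measurable.mul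
      (measurable_const.pow (he.measurable.sub measurable_const)))).aestronglyMeasurable
  · exact .of_forall fun p hp y hy =>
      hC (y, p) ⟨Metric.ball_subset_closedBall hy, uIoc_subset_uIcc hp⟩
  · exact .of_forall fun p _ y hy =>
      (hasDerivAt_rpow_const (Or.inl (hpos (Metric.ball_subset_closedBall hy)).ne')).const_mul
        (c p)

theorem rpow_mul_rpow_le_tangent {s t u v p : ℝ} (hs : 0 < s) (ht : 0 < t) (hu : 0 ≤ u)
    (hv : 0 ≤ v) (hp₀ : 0 ≤ p) (hp₁ : p ≤ 1) :
    u ^ (1 - p) * v ^ p ≤ s ^ (1 - p) * t ^ p * ((1 - p) * (u / s) + p * (v / t)) := by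
  have amgm := geom_mean_le_arith_mean2_weighted (sub_nonneg.2 hp₁) hp₀
    (div_nonneg hu hs.le) (div_nonneg hv ht.le) (sub_add_cancel 1 p)
  rw [div_rpow hu hs.le, div_rpow hv ht.le] at amgm
  calc u ^ (1 - p) * v ^ p
      = s ^ (1 - p) * t ^ p * (u ^ (1 - p) / s ^ (1 - p) * (v ^ p / t ^ p)) := by
        field_simp
    _ ≤ _ := by gcongr

section LogMean

variable {s t : ℝ}

theorem logMean_comm (s t : ℝ) : logMean s t = logMean t s := by
  have h := intervalIntegral.integral_comp_sub_left (fun p => t ^ (1 - p) * s ^ p) (a := 0)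
    (b := 1) 1
  simp only [sub_sub_cancel, sub_zero, sub_self] at h
  rw [logMean, logMean, ← h]
  exact intervalIntegral.integral_congr fun p _ => mul_comm _ _

theorem logMean_nonneg (hs : 0 ≤ s) (ht : 0 ≤ t) : 0 ≤ logMean s t :=
  intervalIntegral.integral_nonneg zero_le_one fun p _ => by positivity

theorem logMean₁_eq_integral (hs : 0 < s) (ht : 0 < t) :
    logMean₁ s t = ∫ p in (0:ℝ)..1, t ^ p * ((1 - p) * s ^ (1 - p - 1)) := by
  have h : (fun u => logMean u t) = fun u => ∫ p in (0:ℝ)..1, t ^ p * u ^ (1 - p) :=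
    funext fun u => intervalIntegral.integral_congr fun p _ => mul_comm _ _
  rw [logMean₁, h]
  exact (hasDerivAt_integral_mul_rpow (by fun_prop (disch := positivity)) (by fun_prop) hs).deriv

theorem logMean₂_eq_integral (hs : 0 < s) (ht : 0 < t) :
    logMean₂ s t = ∫ p in (0:ℝ)..1, s ^ (1 - p) * (p * t ^ (p - 1)) :=
  (hasDerivAt_integral_mul_rpow (by fun_prop (disch := positivity)) continuous_id ht).deriv

theorem mul_logMean₁_add_mul_logMean₂ (hs : 0 < s) (ht : 0 < t) (u v : ℝ) :
    u * logMean₁ s t + v * logMean₂ s t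
      = ∫ p in (0:ℝ)..1, s ^ (1 - p) * t ^ p * ((1 - p) * (u / s) + p * (v / t)) := by
  rw [logMean₁_eq_integral hs ht, logMean₂_eq_integral hs ht,
    ← intervalIntegral.integral_const_mul, ← intervalIntegral.integral_const_mul,
    ← intervalIntegral.integral_add
      (Continuous.intervalIntegrable (by fun_prop (disch := positivity)) _ _)
      (Continuous.intervalIntegrable (by fun_prop (disch := positivity)) _ _)]
  refine intervalIntegral.integral_congr fun p _ => ?_
  simp only [rpow_sub_one hs.ne', rpow_sub_one ht.ne']
  field_simp

theorem mul_logMean₁_add_mul_logMean₂_self (hs : 0 < s) (ht : 0 < t) :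
    s * logMean₁ s t + t * logMean₂ s t = logMean s t := by
  rw [mul_logMean₁_add_mul_logMean₂ hs ht, logMean]
  refine intervalIntegral.integral_congr fun p _ => ?_
  simp only [div_self hs.ne', div_self ht.ne']
  ring

theorem logMeanDeficit_nonneg {u v : ℝ} (hs : 0 < s) (ht : 0 < t) (hu : 0 < u) (hv : 0 < v) :
    0 ≤ logMeanDeficit s t u v := by
  rw [logMeanDeficit, sub_nonneg, mul_logMean₁_add_mul_logMean₂ hs ht, logMean]
  refine intervalIntegral.integral_mono_on zero_le_one ?_ ?_ fun p hp =>
    rpow_mul_rpow_le_tangent hs ht hu.le hv.le hp.1 hp.2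
  all_goals exact Continuous.intervalIntegrable (by fun_prop (disch := positivity)) _ _

theorem logMean₁_mul_sub_add_logMean₂_mul_sub (hs : 0 < s) (ht : 0 < t) (u v : ℝ) :
    logMean₁ s t * (u - s) + logMean₂ s t * (v - t)
      = logMeanDeficit s t u v + (logMean u v - logMean s t) := by
  rw [logMeanDeficit, ← mul_logMean₁_add_mul_logMean₂_self hs ht]
  ring

end LogMean

theorem ZMod.sum_univ_four {M : Type*} [AddCommMonoid M] (f : ZMod 4 → M) :
    ∑ i, f i = f 0 + f 1 + f 2 + f 3 :=
  Fin.sum_univ_four f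

theorem sum_cycle_four (ψ θ : ZMod 4 → ℝ) :
    ∑ i, ((1/2) * (ψ (i+1) - ψ i)^2 * (θ (i+2) - θ i)
        - (ψ (i+1) - ψ i) * ((ψ (i+2) - ψ (i+1)) + (ψ i - ψ (i-1))) * θ i)
      = (1/2) * ((ψ 1 - ψ 0) + (ψ 3 - ψ 2))^2 * ∑ i, θ i := by
  simp only [ZMod.sum_univ_four]
  reduce_mod_char
  ring

theorem square_offdiag_decomposition_general (μ d : ℝ) (hμ : 0 < μ)
    (ρ : ZMod 4 → ℝ) (hρ : ∀ i, 0 < ρ i) (ψ : ZMod 4 → ℝ) :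
    (μ / d^2) * ∑ i : ZMod 4,
        ((1/2) * (ψ (i+1) - ψ i)^2 *
            (logMean₁ (ρ i) (ρ (i+1)) * (ρ (i-1) - ρ i)
              + logMean₂ (ρ i) (ρ (i+1)) * (ρ (i+2) - ρ (i+1)))
          - (ψ (i+1) - ψ i) * ((ψ (i+2) - ψ (i+1)) + (ψ i - ψ (i-1)))
              * logMean (ρ i) (ρ (i+1)))
      = (μ / (2*d^2)) * ((ψ 1 - ψ 0) + (ψ 3 - ψ 2))^2 *
            (∑ i : ZMod 4, logMean (ρ i) (ρ (i+1)))
        + (μ / (2*d^2)) * ∑ i : ZMod 4, (ψ (i+1) - ψ i)^2 *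
            logMeanDeficit (ρ i) (ρ (i+1)) (ρ (i-1)) (ρ (i+2)) ∧
    (μ / d^2) * ∑ i : ZMod 4,
        ((1/2) * (ψ (i+1) - ψ i)^2 *
            (logMean₁ (ρ i) (ρ (i+1)) * (ρ (i-1) - ρ i)
              + logMean₂ (ρ i) (ρ (i+1)) * (ρ (i+2) - ρ (i+1)))
          - (ψ (i+1) - ψ i) * ((ψ (i+2) - ψ (i+1)) + (ψ i - ψ (i-1)))
              * logMean (ρ i) (ρ (i+1))) ≥ 0 := by
  have hsummand (i : ZMod 4) :
      (1/2) * (ψ (i+1) - ψ i)^2 *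
          (logMean₁ (ρ i) (ρ (i+1)) * (ρ (i-1) - ρ i)
            + logMean₂ (ρ i) (ρ (i+1)) * (ρ (i+2) - ρ (i+1)))
        - (ψ (i+1) - ψ i) * ((ψ (i+2) - ψ (i+1)) + (ψ i - ψ (i-1))) * logMean (ρ i) (ρ (i+1))
      = (1/2) * ((ψ (i+1) - ψ i)^2 * logMeanDeficit (ρ i) (ρ (i+1)) (ρ (i-1)) (ρ (i+2)))
        + ((1/2) * (ψ (i+1) - ψ i)^2
              * (logMean (ρ (i+2)) (ρ (i+2+1)) - logMean (ρ i) (ρ (i+1)))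
            - (ψ (i+1) - ψ i) * ((ψ (i+2) - ψ (i+1)) + (ψ i - ψ (i-1)))
              * logMean (ρ i) (ρ (i+1))) := by
    rw [logMean₁_mul_sub_add_logMean₂_mul_sub (hρ i) (hρ (i+1)), logMean_comm (ρ (i-1)),
      (by decide : ∀ j : ZMod 4, j + 2 + 1 = j - 1)]
    ring
  rw [Finset.sum_congr rfl fun i _ => hsummand i, Finset.sum_add_distrib, ← Finset.mul_sum,
    sum_cycle_four ψ fun i => logMean (ρ i) (ρ (i+1))]
  refine ⟨by ring, mul_nonneg (by positivity) (add_nonneg ?_ ?_)⟩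
  · exact mul_nonneg (by norm_num) <| Finset.sum_nonneg fun i _ => mul_nonneg (sq_nonneg _)
      (logMeanDeficit_nonneg (hρ i) (hρ (i+1)) (hρ (i-1)) (hρ (i+2)))
  · exact mul_nonneg (by positivity) <| Finset.sum_nonneg fun i _ =>
      logMean_nonneg (hρ i).le (hρ (i+1)).le

/-- Off-diagonal term for a square `x₁,x₂,x₃,x₄` (vertices indexed cyclically by
`ZMod 4`, `gᵢ = ψ(x_{i+1}) - ψ(xᵢ)`) in a `d`-regular graph with uniform measure
`μ`: the decomposition of `B^off_□(ρ,ψ)` into nonnegative terms, and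
`B^off_□(ρ,ψ) ≥ 0`. -/
theorem square_offdiag_decomposition (μ d : ℝ) (hμ : 0 < μ) (hd : 0 < d)
    (ρ : ZMod 4 → ℝ) (hρ : ∀ i, 0 < ρ i) (ψ : ZMod 4 → ℝ) :
    (μ / d^2) * ∑ i : ZMod 4,
        ((1/2) * (ψ (i+1) - ψ i)^2 *
            (logMean₁ (ρ i) (ρ (i+1)) * (ρ (i-1) - ρ i)
              + logMean₂ (ρ i) (ρ (i+1)) * (ρ (i+2) - ρ (i+1)))
          - (ψ (i+1) - ψ i) * ((ψ (i+2) - ψ (i+1)) + (ψ i - ψ (i-1)))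
              * logMean (ρ i) (ρ (i+1)))
      = (μ / (2*d^2)) * ((ψ 1 - ψ 0) + (ψ 3 - ψ 2))^2 *
            (∑ i : ZMod 4, logMean (ρ i) (ρ (i+1)))
        + (μ / (2*d^2)) * ∑ i : ZMod 4, (ψ (i+1) - ψ i)^2 *
            logMeanDeficit (ρ i) (ρ (i+1)) (ρ (i-1)) (ρ (i+2)) ∧
    (μ / d^2) * ∑ i : ZMod 4,
        ((1/2) * (ψ (i+1) - ψ i)^2 *
            (logMean₁ (ρ i) (ρ (i+1)) * (ρ (i-1) - ρ i)
              + logMean₂ (ρ i) (ρ (i+1)) * (ρ (i+2) - ρ (i+1)))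
          - (ψ (i+1) - ψ i) * ((ψ (i+2) - ψ (i+1)) + (ψ i - ψ (i-1)))
              * logMean (ρ i) (ρ (i+1))) ≥ 0 :=
  square_offdiag_decomposition_general μ d hμ ρ hρ ψ
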